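/- The isoperimetric constant of the 2n-regular tree T_n (the Cayley graph of the free group F_n, n ≥ 2, with respect to a free generating set S) equals (n−1)/n; that is, inf over all finite nonempty subsets A of F_n of (1/(2n))·#{(g,s) : g ∈ A, s ∈ S ∪ S^{−1}, gs ∉ A}/card(A) = (n−1)/n. -/

import Mathlib

open Filter Real

noncomputable section

namespace JM

/-- The free group of rank `n`. -/
abbrev F (n : ℕ) := FreeGroup (Fin n)

/-- The Poincaré exponent of a subgroup `G` of the free group, with respect to the
word metric of the standard free generating set. -/
def poincareExponent (n : ℕ) (G : Subgroup (F n)) : ℝ :=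
  limsup (fun R : ℕ =>
    Real.log (Nat.card {g : F n // g ∈ G ∧ FreeGroup.norm g ≤ R}) / R) atTop

/-- `G` is of divergence type if its Poincaré series diverges at the exponent. -/
def DivergenceType (n : ℕ) (G : Subgroup (F n)) : Prop :=
  ¬ Summable (fun g : G => Real.exp (-(poincareExponent n G) * FreeGroup.norm (g : F n)))

/-- The vertex set of the quotient graph `Γ_H = T_n/H`: the right cosets `Hg`. -/
abbrev Cosets (n : ℕ) (H : Subgroup (F n)) := Quotient (QuotientGroup.rightRel H)

/-- Right multiplication on right cosets: `Hg ↦ Hga`. -/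
def rmul {n : ℕ} {H : Subgroup (F n)} (x : Cosets n H) (a : F n) : Cosets n H :=
  Quotient.liftOn x (fun g => Quotient.mk (QuotientGroup.rightRel H) (g * a))
    (fun b c h => Quotient.sound (by
      have h' := QuotientGroup.rightRel_apply.mp h
      show (QuotientGroup.rightRel H) _ _
      rw [QuotientGroup.rightRel_apply]
      simpa [mul_assoc] using h'))

/-- Distance from the base vertex `H` to the vertex `Hg` in the quotient graph,
namely `min_{h ∈ H} |hg|`. -/
def cosetDist {n : ℕ} {H : Subgroup (F n)} (x : Cosets n H) : ℕ :=
  sInf (FreeGroup.norm '' {g : F n | Quotient.mk (QuotientGroup.rightRel H) g = x})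

/-- The exponential growth rate of the quotient graph `Γ_H = T_n/H`. -/
def graphGrowth (n : ℕ) (H : Subgroup (F n)) : ℝ :=
  limsup (fun R : ℕ =>
    (Nat.card {x : Cosets n H // cosetDist x ≤ R} : ℝ) ^ (1 / (R : ℝ))) atTop

/-- the generators `S ∪ S⁻¹`, indexed by `Fin n × Bool`. -/
def sgen {n : ℕ} (p : Fin n × Bool) : F n :=
  if p.2 then FreeGroup.of p.1 else (FreeGroup.of p.1)⁻¹

/-- The number of boundary edges of a finite set `A` of vertices of `Γ_H`. -/
def boundaryCard {n : ℕ} {H : Subgroup (F n)} (A : Finset (Cosets n H)) : ℕ :=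
  Nat.card {p : Cosets n H × (Fin n × Bool) // p.1 ∈ A ∧ rmul p.1 (sgen p.2) ∉ A}

/-- The isoperimetric constant of the `2n`-regular graph `Γ_H`. -/
def isoConst (n : ℕ) (H : Subgroup (F n)) : ℝ :=
  sInf {r : ℝ | ∃ A : Finset (Cosets n H), A.Nonempty ∧
    r = (boundaryCard A : ℝ) / (2 * n * A.card)}

/-- The bottom of the spectrum of the discrete Laplacian on `Γ_H`, as the infimum of
Rayleigh quotients of finitely supported nonzero functions. -/
def lambdaZero (n : ℕ) (H : Subgroup (F n)) : ℝ :=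
  sInf {r : ℝ | ∃ f : Cosets n H → ℝ, (Function.support f).Finite ∧ f ≠ 0 ∧
    r = (∑ᶠ x, ∑ i : Fin n, (f x - f (rmul x (FreeGroup.of i))) ^ 2) /
        (2 * n * ∑ᶠ x, (f x) ^ 2)}

/-- The transition operator of the simple random walk on `Γ_H`. -/
def transOp {n : ℕ} {H : Subgroup (F n)} (f : Cosets n H → ℝ) (x : Cosets n H) : ℝ :=
  (1 / (2 * n)) * ∑ p : Fin n × Bool, f (rmul x (sgen p))

/-- The spectral radius of the transition operator `P` of the simple random walk on
`Γ_N`: since `P` is bounded and self-adjoint on `ℓ²`, its spectral radius equals its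
operator norm, i.e. the supremum of `‖Pf‖/‖f‖` over finitely supported nonzero `f`. -/
def specRad (n : ℕ) (H : Subgroup (F n)) : ℝ :=
  sSup {r : ℝ | ∃ f : Cosets n H → ℝ, (Function.support f).Finite ∧ f ≠ 0 ∧
    r = Real.sqrt (∑ᶠ x, (transOp f x) ^ 2) / Real.sqrt (∑ᶠ x, (f x) ^ 2)}

/-! The Cayley graph is a tree: every vertex `g ≠ 1` has exactly one neighbour closer to `1`.
A directed edge with both ends in a finite set `A` is the edge towards `1` at its origin or the
reverse of such an edge, so there are at most `2 * #A` of them, and at least `(2n - 2) * #A` edges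
leave `A`. Segments `{a ^ i | i < k}` have `2 * (k - 1)` inner edges, so their ratios tend to
`(n - 1) / n`. -/

open FreeGroup Finset

section FreeGroupNorm

variable {α : Type*} [DecidableEq α]

theorem toWord_mk_singleton_mul (x : α × Bool) (g : FreeGroup α) :
    (mk [x] * g).toWord = reduce (x :: g.toWord) := by
  rw [toWord_mul, toWord_mk, reduce_singleton, List.singleton_append]

theorem norm_mk_singleton_mul (x : α × Bool) (g : FreeGroup α) :
    (g.toWord.head? = some (x.1, !x.2) ∧ FreeGroup.norm (mk [x] * g) + 1 = FreeGroup.norm g) ∨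
      (g.toWord.head? ≠ some (x.1, !x.2) ∧ FreeGroup.norm (mk [x] * g) = FreeGroup.norm g + 1) := by
  have hw := toWord_mk_singleton_mul x g
  rw [reduce.cons, reduce_toWord] at hw
  simp only [FreeGroup.norm, hw]
  rcases g.toWord with _ | ⟨y, w⟩
  · simp
  · by_cases hy : y = (x.1, !x.2)
    · subst hy; simp
    · have : ¬(x.1 = y.1 ∧ x.2 = !y.2) := by
        rintro ⟨h1, h2⟩; exact hy (Prod.ext h1.symm (by simp [h2]))
      simp [hy, this]

theorem of_pow_injective (a : α) :
    Function.Injective fun i : ℕ => (of a) ^ i := fun i j h => by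
  simpa using congrArg FreeGroup.norm h

end FreeGroupNorm

variable {n : ℕ}

theorem sgen_eq_mk (p : Fin n × Bool) : sgen p = mk [p] := by
  obtain ⟨a, _ | _⟩ := p <;> simp [sgen, FreeGroup.of, inv_mk, invRev]

theorem sgen_inv (p : Fin n × Bool) : (sgen p)⁻¹ = sgen (p.1, !p.2) := by
  obtain ⟨a, _ | _⟩ := p <;> simp [sgen]

theorem norm_mul_sgen (g : F n) (p : Fin n × Bool) :
    (g⁻¹.toWord.head? = some p ∧ FreeGroup.norm (g * sgen p) + 1 = FreeGroup.norm g) ∨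
      (g⁻¹.toWord.head? ≠ some p ∧ FreeGroup.norm (g * sgen p) = FreeGroup.norm g + 1) := by
  have h := norm_mk_singleton_mul (p.1, !p.2) g⁻¹
  rwa [← sgen_eq_mk, ← sgen_inv, ← mul_inv_rev, norm_inv_eq, norm_inv_eq, Bool.not_not] at h

theorem norm_mul_sgen_lt_iff (g : F n) (p : Fin n × Bool) :
    FreeGroup.norm (g * sgen p) < FreeGroup.norm g ↔ g⁻¹.toWord.head? = some p := by
  rcases norm_mul_sgen g p with ⟨hp, hnorm⟩ | ⟨hp, hnorm⟩
  · exact ⟨fun _ => hp, fun _ => by omega⟩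
  · exact ⟨fun hlt => by omega, fun hp' => absurd hp' hp⟩

theorem norm_mul_sgen_of_not_lt {g : F n} {p : Fin n × Bool}
    (h : ¬FreeGroup.norm (g * sgen p) < FreeGroup.norm g) :
    FreeGroup.norm (g * sgen p) = FreeGroup.norm g + 1 := by
  rcases norm_mul_sgen g p with ⟨_, _⟩ | ⟨_, _⟩ <;> omega

def innerEdges (A : Finset (F n)) : Finset (F n × (Fin n × Bool)) :=
  (A ×ˢ univ).filter fun e => e.1 * sgen e.2 ∈ A

def boundaryEdges (A : Finset (F n)) : Finset (F n × (Fin n × Bool)) :=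
  (A ×ˢ univ).filter fun e => e.1 * sgen e.2 ∉ A

def reverseEdge (e : F n × (Fin n × Bool)) : F n × (Fin n × Bool) :=
  (e.1 * sgen e.2, (e.2.1, !e.2.2))

theorem mem_innerEdges {A : Finset (F n)} {e : F n × (Fin n × Bool)} :
    e ∈ innerEdges A ↔ e.1 ∈ A ∧ e.1 * sgen e.2 ∈ A := by
  simp [innerEdges]

theorem reverseEdge_reverseEdge (e : F n × (Fin n × Bool)) : reverseEdge (reverseEdge e) = e := by
  simp [reverseEdge, ← sgen_inv]

theorem reverseEdge_mem_innerEdges {A : Finset (F n)} {e : F n × (Fin n × Bool)}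
    (he : e ∈ innerEdges A) : reverseEdge e ∈ innerEdges A := by
  rw [mem_innerEdges] at he ⊢
  simpa [reverseEdge, ← sgen_inv] using he.symm

theorem natCard_boundary_eq_card_boundaryEdges (A : Finset (F n)) :
    Nat.card {e : F n × (Fin n × Bool) // e.1 ∈ A ∧ e.1 * sgen e.2 ∉ A} =
      #(boundaryEdges A) := by
  rw [← Nat.card_eq_finsetCard]
  exact Nat.card_congr <| Equiv.subtypeEquivRight fun e => by simp [boundaryEdges]

theorem card_boundaryEdges_add_card_innerEdges (A : Finset (F n)) :
    #(boundaryEdges A) + #(innerEdges A) = 2 * n * #A := by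
  rw [add_comm, innerEdges, boundaryEdges, card_filter_add_card_filter_not, card_product,
    card_univ, Fintype.card_prod, Fintype.card_fin, Fintype.card_bool]
  ring

theorem card_innerEdges_le (A : Finset (F n)) : #(innerEdges A) ≤ 2 * #A := by
  set D := (innerEdges A).filter fun e => FreeGroup.norm (e.1 * sgen e.2) < FreeGroup.norm e.1
  have hD : #D ≤ #A := by
    refine card_le_card_of_injOn Prod.fst (fun e he => (mem_innerEdges.1 (mem_filter.1 he).1).1)
      fun e he e' he' h => ?_
    have hp := (norm_mul_sgen_lt_iff _ _).1 (mem_filter.1 he).2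
    have hp' := (norm_mul_sgen_lt_iff _ _).1 (mem_filter.1 he').2
    rw [← h, hp] at hp'
    exact Prod.ext h (Option.some_injective _ hp')
  have hcover : innerEdges A ⊆ D ∪ D.image reverseEdge := by
    intro e he
    by_cases hlt : FreeGroup.norm (e.1 * sgen e.2) < FreeGroup.norm e.1
    · exact mem_union_left _ (mem_filter.2 ⟨he, hlt⟩)
    · refine mem_union_right _ (mem_image.2 ⟨reverseEdge e, mem_filter.2
        ⟨reverseEdge_mem_innerEdges he, ?_⟩, reverseEdge_reverseEdge e⟩)
      simp only [reverseEdge, ← sgen_inv, mul_inv_cancel_right]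
      have := norm_mul_sgen_of_not_lt hlt
      omega
  calc #(innerEdges A) ≤ #D + #(D.image reverseEdge) :=
        (card_le_card hcover).trans (card_union_le _ _)
    _ ≤ #D + #D := Nat.add_le_add_left card_image_le _
    _ ≤ 2 * #A := by omega

def pathSet (a : Fin n) (k : ℕ) : Finset (F n) :=
  (range k).image fun i => of a ^ i

theorem card_pathSet (a : Fin n) (k : ℕ) : #(pathSet a k) = k := by
  rw [pathSet, card_image_of_injective _ (of_pow_injective a), card_range]

theorem pow_mem_pathSet {a : Fin n} {k i : ℕ} (hi : i < k) : of a ^ i ∈ pathSet a k :=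
  mem_image.2 ⟨i, mem_range.2 hi, rfl⟩

theorem two_mul_sub_one_le_card_innerEdges_pathSet (a : Fin n) (k : ℕ) :
    2 * (k - 1) ≤ #(innerEdges (pathSet a k)) := by
  have hedge : ∀ q : ℕ × Bool, q.1 < k - 1 →
      (of a ^ (q.1 + (!q.2).toNat), (a, q.2)) ∈ innerEdges (pathSet a k) := by
    rintro ⟨i, _ | _⟩ hi <;> rw [mem_innerEdges]
    · simp only [Bool.not_false, Bool.toNat_true, sgen, if_neg Bool.false_ne_true]
      refine ⟨pow_mem_pathSet (by omega), ?_⟩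
      rw [pow_succ, mul_inv_cancel_right]
      exact pow_mem_pathSet (by omega)
    · simp only [Bool.not_true, Bool.toNat_false, add_zero, sgen, if_true, ← pow_succ]
      exact ⟨pow_mem_pathSet (by omega), pow_mem_pathSet (by omega)⟩
  calc 2 * (k - 1) = #(range (k - 1) ×ˢ (univ : Finset Bool)) := by
        rw [card_product, card_range, card_univ, Fintype.card_bool, mul_comm]
    _ ≤ #(innerEdges (pathSet a k)) := by
      refine card_le_card_of_injOn _ (fun q hq => hedge q (mem_range.1 (mem_product.1 hq).1))
        fun q _ q' _ h => ?_
      simp only [Prod.mk.injEq] at h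
      obtain ⟨hpow, -, hb⟩ := h
      have := of_pow_injective a hpow
      simp only [hb] at this
      exact Prod.ext (by omega) hb

def isoRatio (A : Finset (F n)) : ℝ :=
  (Nat.card {p : F n × (Fin n × Bool) // p.1 ∈ A ∧ p.1 * sgen p.2 ∉ A} : ℝ) / (2 * n * #A)

theorem isoRatio_eq (hn : 0 < n) {A : Finset (F n)} (hA : A.Nonempty) :
    isoRatio A = 1 - #(innerEdges A) / (2 * n * #A) := by
  have hpos : (0 : ℝ) < 2 * n * #A := by have := hA.card_pos; positivity
  have hcount : (#(boundaryEdges A) + #(innerEdges A) : ℝ) = 2 * n * #A := by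
    exact_mod_cast card_boundaryEdges_add_card_innerEdges A
  rw [isoRatio, natCard_boundary_eq_card_boundaryEdges, eq_sub_iff_add_eq, ← add_div,
    hcount, div_self hpos.ne']

theorem sub_one_div_le_isoRatio (hn : 0 < n) {A : Finset (F n)} (hA : A.Nonempty) :
    ((n : ℝ) - 1) / n ≤ isoRatio A := by
  have hinner : (#(innerEdges A) : ℝ) ≤ 2 * #A := by exact_mod_cast card_innerEdges_le A
  have hA' : (0 : ℝ) < #A := by exact_mod_cast hA.card_pos
  calc ((n : ℝ) - 1) / n = 1 - 2 * #A / (2 * n * #A) := by field_simp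
    _ ≤ isoRatio A := by rw [isoRatio_eq hn hA]; gcongr

theorem isoRatio_pathSet_le (hn : 0 < n) (a : Fin n) {k : ℕ} (hk : 1 ≤ k) :
    isoRatio (pathSet a k) ≤ ((n : ℝ) - 1) / n + 1 / (n * k) := by
  have hne : (pathSet a k).Nonempty := ⟨_, pow_mem_pathSet hk⟩
  have hinner : 2 * ((k : ℝ) - 1) ≤ #(innerEdges (pathSet a k)) := by
    have := two_mul_sub_one_le_card_innerEdges_pathSet a k
    rw [← Nat.cast_pred hk]
    exact_mod_cast this
  have hk' : (0 : ℝ) < k := by exact_mod_cast hk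
  calc isoRatio (pathSet a k) ≤ 1 - 2 * ((k : ℝ) - 1) / (2 * n * k) := by
        rw [isoRatio_eq hn hne, card_pathSet]; gcongr
    _ = ((n : ℝ) - 1) / n + 1 / (n * k) := by field_simp; ring

/-- The isoperimetric constant of the `2n`-regular tree `T_n`
(the Cayley graph of `F_n`, `n ≥ 2`) equals `(n−1)/n`. -/
theorem stmt10 (n : ℕ) (hn : 2 ≤ n) :
    sInf {r : ℝ | ∃ A : Finset (F n), A.Nonempty ∧
      r = (Nat.card {p : F n × (Fin n × Bool) // p.1 ∈ A ∧ p.1 * sgen p.2 ∉ A} : ℝ) /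
          (2 * n * A.card)} = (n - 1) / n := by
  have hn0 : 0 < n := by omega
  change sInf {r : ℝ | ∃ A : Finset (F n), A.Nonempty ∧ r = isoRatio A} = _
  refine csInf_eq_of_forall_ge_of_forall_gt_exists_lt ⟨_, {1}, singleton_nonempty 1, rfl⟩
    (fun _ ⟨A, hA, hr⟩ => hr ▸ sub_one_div_le_isoRatio hn0 hA) fun w hw => ?_
  obtain ⟨k, hk⟩ := exists_nat_one_div_lt (sub_pos.2 hw)
  refine ⟨_, ⟨pathSet ⟨0, hn0⟩ (k + 1), ⟨_, pow_mem_pathSet k.succ_pos⟩, rfl⟩, ?_⟩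
  have hn1 : (1 : ℝ) ≤ n := by exact_mod_cast hn0
  calc isoRatio (pathSet ⟨0, hn0⟩ (k + 1)) ≤ ((n : ℝ) - 1) / n + 1 / (n * (k + 1 : ℕ)) :=
        isoRatio_pathSet_le hn0 _ (Nat.le_add_left 1 k)
    _ ≤ ((n : ℝ) - 1) / n + 1 / (k + 1) := by
        push_cast; gcongr; exact le_mul_of_one_le_left (by positivity) hn1
    _ < w := by linarith

end JM
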